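/- For all α, β ∈ ℝ and every complex-valued f ∈ C_0^∞((0,π/2)) one has ∫_0^{π/2} |f'(x)|² dx ≥ (α+β)² ∫_0^{π/2} |f(x)|² dx + (β−β²) ∫_0^{π/2} |f(x)|² / sin²(x) dx + (α−α²) ∫_0^{π/2} |f(x)|² / cos²(x) dx. -/

import Mathlib

open MeasureTheory Set
open scoped ContDiff

private lemma key_alg (α β s c G : ℝ) (hs : s ≠ 0) (hc : c ≠ 0) (hpy : s^2 + c^2 = 1) :
    (α*(1/(c*c)) + β*(1/(s*s))) * G - (α*(s/c) - β*(c/s))^2 * G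
      = (α+β)^2 * G + ((β - β^2) * (G / s^2) + (α - α^2) * (G / c^2)) := by
  field_simp
  ring_nf
  linear_combination (-(G*α^2*s^2) - G*β^2*c^2) * hpy

private lemma key_pt (c r2 i2 r1 i1 : ℝ) :
    0 ≤ (r2^2 + i2^2) + (c^2 * (r1^2 + i1^2) + c * (2*(r1*r2 + i1*i2))) := by
  nlinarith [sq_nonneg (r2 + c*r1), sq_nonneg (i2 + c*i1)]

private lemma norm_sq_complex (z : ℂ) : ‖z‖^2 = z.re^2 + z.im^2 := by
  rw [Complex.sq_norm, Complex.normSq_apply]; ring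

set_option maxHeartbeats 2000000 in
theorem stmt_14 (α β : ℝ) (f : ℝ → ℂ) (hf : ContDiff ℝ (⊤ : ℕ∞) f) (hsupp : HasCompactSupport f)
    (hsub : tsupport f ⊆ Ioo 0 (Real.pi / 2)) :
    ∫ x in Ioo (0 : ℝ) (Real.pi / 2), ‖deriv f x‖ ^ 2
      ≥ (α + β) ^ 2 * (∫ x in Ioo (0 : ℝ) (Real.pi / 2), ‖f x‖ ^ 2)
        + (β - β ^ 2) * (∫ x in Ioo (0 : ℝ) (Real.pi / 2), ‖f x‖ ^ 2 / (Real.sin x) ^ 2)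
        + (α - α ^ 2) * ∫ x in Ioo (0 : ℝ) (Real.pi / 2), ‖f x‖ ^ 2 / (Real.cos x) ^ 2 := by
  have hπ : 0 < Real.pi / 2 := by positivity
  have h1i : (1 : WithTop ℕ∞) ≤ ∞ := by exact_mod_cast le_top
  have hf' : ContDiff ℝ ∞ f := hf.of_le (by simp)
  -- trivial case: f = 0
  by_cases hne : (tsupport f).Nonempty
  case neg =>
    have hf0 : f = 0 := by
      ext x
      have : x ∉ tsupport f := fun h => hne ⟨x, h⟩
      simpa using image_eq_zero_of_notMem_tsupport this
    subst hf0
    have hd0 : deriv (0 : ℝ → ℂ) = fun _ => (0 : ℂ) := by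
      funext x
      exact deriv_const x 0
    simp [hd0]
  -- setup of the interval and cutoff
  set K := tsupport f with hK
  have hKc : IsCompact K := hsupp
  have hbddb : BddBelow K := hKc.bddBelow
  have hbdda : BddAbove K := hKc.bddAbove
  set m := sInf K with hm_def
  set M := sSup K with hM_def
  have hmK : m ∈ K := hKc.isClosed.csInf_mem hne hbddb
  have hMK : M ∈ K := hKc.isClosed.csSup_mem hne hbdda
  have hm : m ∈ Ioo 0 (Real.pi / 2) := hsub hmK
  have hM : M ∈ Ioo 0 (Real.pi / 2) := hsub hMK
  have hKsub : ∀ x ∈ K, m ≤ x ∧ x ≤ M := fun x hx => ⟨csInf_le hbddb hx, le_csSup hbdda hx⟩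
  set a : ℝ := m / 2 with ha_def
  set b : ℝ := (M + Real.pi / 2) / 2 with hb_def
  have ha0 : 0 < a := by simp only [ha_def]; linarith [hm.1]
  have ham : a < m := by simp only [ha_def]; linarith [hm.1]
  have hmM : m ≤ M := le_csSup hbdda hmK
  have hMb : M < b := by simp only [hb_def]; linarith [hM.2]
  have hbπ : b < Real.pi / 2 := by simp only [hb_def]; linarith [hM.2]
  have hab : a < b := by linarith
  have hKab : K ⊆ Ioo a b := fun x hx => ⟨lt_of_lt_of_le ham (hKsub x hx).1,
    lt_of_le_of_lt (hKsub x hx).2 hMb⟩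
  set c₀ : ℝ := (a + b) / 2 with hc₀_def
  set rIn : ℝ := (b - a) / 2 with hrIn_def
  set rOut : ℝ := (rIn + min c₀ (Real.pi / 2 - c₀)) / 2 with hrOut_def
  have hrIn0 : 0 < rIn := by simp only [hrIn_def]; linarith
  have hrInc : rIn < min c₀ (Real.pi / 2 - c₀) := by
    rw [lt_min_iff]
    constructor <;> simp only [hrIn_def, hc₀_def] <;> linarith
  have hrInOut : rIn < rOut := by simp only [hrOut_def]; linarith
  have hrOutc : rOut < min c₀ (Real.pi / 2 - c₀) := by simp only [hrOut_def]; linarith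
  have hrOutc1 : rOut < c₀ := lt_of_lt_of_le hrOutc (min_le_left _ _)
  have hrOutc2 : rOut < Real.pi / 2 - c₀ := lt_of_lt_of_le hrOutc (min_le_right _ _)
  set χ : ContDiffBump c₀ := ⟨rIn, rOut, hrIn0, hrInOut⟩ with hχ_def
  have hca : c₀ - rIn = a := by simp only [hc₀_def, hrIn_def]; ring
  have hcb : c₀ + rIn = b := by simp only [hc₀_def, hrIn_def]; ring
  have hχ1 : ∀ x ∈ Icc a b, (χ : ℝ → ℝ) x = 1 := by
    intro x hx
    apply χ.one_of_mem_closedBall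
    rw [show χ.rIn = rIn from rfl, Real.closedBall_eq_Icc, hca, hcb]
    exact hx
  have hχ0 : ∀ x ∉ Ioo (c₀ - rOut) (c₀ + rOut), (χ : ℝ → ℝ) x = 0 := by
    intro x hx
    have : x ∉ Function.support (χ : ℝ → ℝ) := by
      rw [χ.support_eq, show χ.rOut = rOut from rfl, Real.ball_eq_Ioo]
      exact hx
    simpa [Function.mem_support, not_not] using this
  have hIccsub : Icc (c₀ - rOut) (c₀ + rOut) ⊆ Ioo 0 (Real.pi / 2) := by
    intro x hx
    exact ⟨by linarith [hx.1], by linarith [hx.2]⟩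
  -- the weight functions
  set φ : ℝ → ℝ := fun x => α * (Real.sin x / Real.cos x) - β * (Real.cos x / Real.sin x)
    with hφ_def
  set ψ : ℝ → ℝ := fun x => (χ : ℝ → ℝ) x * φ x with hψ_def
  set h₁ : ℝ → ℝ := fun x => ‖f x‖ ^ 2 / Real.sin x ^ 2 with hh₁_def
  set h₂ : ℝ → ℝ := fun x => ‖f x‖ ^ 2 / Real.cos x ^ 2 with hh₂_def
  set g : ℝ → ℝ := fun x => ‖f x‖ ^ 2 with hg_def
  have hgK : ∀ x ∉ K, g x = 0 := by
    intro x hx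
    simp [hg_def, image_eq_zero_of_notMem_tsupport hx]
  have hsc : ∀ x ∈ Ioo (0:ℝ) (Real.pi / 2), 0 < Real.sin x ∧ 0 < Real.cos x := by
    intro x hx
    constructor
    · exact Real.sin_pos_of_pos_of_lt_pi hx.1 (lt_trans hx.2 (by linarith [Real.pi_pos]))
    · exact Real.cos_pos_of_mem_Ioo ⟨by linarith [hx.1, Real.pi_pos], hx.2⟩
  -- smoothness of ψ
  have hφsm : ∀ x ∈ Ioo (0:ℝ) (Real.pi / 2), ContDiffAt ℝ ∞ φ x := by
    intro x hx
    obtain ⟨hs, hc⟩ := hsc x hx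
    exact ((contDiffAt_const.mul (Real.contDiff_sin.contDiffAt.div
      Real.contDiff_cos.contDiffAt hc.ne')).sub
      (contDiffAt_const.mul (Real.contDiff_cos.contDiffAt.div
      Real.contDiff_sin.contDiffAt hs.ne')))
  have hψ : ContDiff ℝ ∞ ψ := by
    rw [contDiff_iff_contDiffAt]
    intro x
    by_cases hx : x ∈ Ioo (0:ℝ) (Real.pi / 2)
    · exact (χ.contDiff (n := (⊤:ℕ∞))).contDiffAt.mul (hφsm x hx)
    · have hxo : x ∈ (Icc (c₀ - rOut) (c₀ + rOut))ᶜ := fun h => hx (hIccsub h)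
      have hopen : IsOpen ((Icc (c₀ - rOut) (c₀ + rOut))ᶜ : Set ℝ) := isClosed_Icc.isOpen_compl
      refine (contDiffAt_const (c := (0:ℝ))).congr_of_eventuallyEq ?_
      filter_upwards [hopen.mem_nhds hxo] with y hy
      have : y ∉ Ioo (c₀ - rOut) (c₀ + rOut) := fun h => hy (Ioo_subset_Icc_self h)
      simp [hψ_def, hχ0 y this]
  have hψsupp : HasCompactSupport ψ :=
    HasCompactSupport.intro isCompact_Icc (fun x hx => by
      have : x ∉ Ioo (c₀ - rOut) (c₀ + rOut) := fun h => hx (Ioo_subset_Icc_self h)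
      simp [hψ_def, hχ0 x this])
  -- smoothness and derivative of g
  have hgeq : g = fun x => (f x).re * (f x).re + (f x).im * (f x).im := by
    funext x
    simp only [hg_def]
    rw [norm_sq_complex]; ring
  have hre : ContDiff ℝ ∞ (fun x => (f x).re) := Complex.reCLM.contDiff.comp hf'
  have him : ContDiff ℝ ∞ (fun x => (f x).im) := Complex.imCLM.contDiff.comp hf'
  have hgsm : ContDiff ℝ ∞ g := by
    rw [hgeq]; exact (hre.mul hre).add (him.mul him)
  have hfd : Differentiable ℝ f := hf'.differentiable (by simp)
  have hgd : ∀ x, HasDerivAt g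
      (2 * ((f x).re * (deriv f x).re + (f x).im * (deriv f x).im)) x := by
    intro x
    have h1 : HasDerivAt (fun y => (f y).re) ((deriv f x).re) x := by
      exact Complex.reCLM.hasFDerivAt.comp_hasDerivAt x (hfd x).hasDerivAt
    have h2 : HasDerivAt (fun y => (f y).im) ((deriv f x).im) x := by
      exact Complex.imCLM.hasFDerivAt.comp_hasDerivAt x (hfd x).hasDerivAt
    have h3 := (h1.mul h1).add (h2.mul h2)
    rw [hgeq]
    exact h3.congr_deriv (by ring)
  have hg'K : ∀ x ∉ K, deriv g x = 0 := by
    intro x hx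
    rw [(hgd x).deriv, image_eq_zero_of_notMem_tsupport hx]
    simp
  have hgsupp : HasCompactSupport g := HasCompactSupport.intro hKc hgK
  -- integration by parts via compact support
  set F : ℝ → ℝ := fun x => ψ x * g x with hF_def
  have hFd : ∀ x, HasDerivAt F (deriv ψ x * g x + ψ x * deriv g x) x := fun x =>
    ((hψ.differentiable (by simp) x).hasDerivAt.mul (hgd x).differentiableAt.hasDerivAt)
  have hF1 : ContDiff ℝ 1 F := (hψ.mul hgsm).of_le h1i
  have hFsupp : HasCompactSupport F :=
    HasCompactSupport.intro hKc (fun x hx => by simp [hF_def, hgK x hx])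
  have hF0 : F (-1) = 0 := by
    have : (-1:ℝ) ∉ Ioo (c₀ - rOut) (c₀ + rOut) := by
      intro h
      have := h.1
      linarith [ha0, hab, hrOutc1]
    simp [hF_def, hψ_def, hχ0 _ this]
  have hIoi : ∫ x in Ioi (-1:ℝ), deriv F x = 0 := by
    rw [HasCompactSupport.integral_Ioi_deriv_eq hF1 hFsupp (-1), hF0, neg_zero]
  have hXF : deriv F = fun x => deriv ψ x * g x + ψ x * deriv g x :=
    funext fun x => (hFd x).deriv
  have hXz : ∀ x ∉ Ioo (0:ℝ) (Real.pi / 2), deriv ψ x * g x + ψ x * deriv g x = 0 := by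
    intro x hx
    have hxK : x ∉ K := fun h => hx (hsub h)
    rw [hgK x hxK, hg'K x hxK]
    ring
  have hIBP : ∫ x in Ioo (0:ℝ) (Real.pi / 2), (deriv ψ x * g x + ψ x * deriv g x) = 0 := by
    rw [setIntegral_eq_integral_of_forall_compl_eq_zero hXz]
    rw [← setIntegral_eq_integral_of_forall_compl_eq_zero
      (s := Ioi (-1:ℝ)) (fun x hx => hXz x (fun h => hx (by
        simp only [mem_Ioi]
        linarith [h.1])))]
    rw [← hXF]
    exact hIoi
  -- continuity facts
  have hcontg : Continuous g := hgsm.continuous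
  have hcontψ : Continuous ψ := hψ.continuous
  have hcontψ' : Continuous (deriv ψ) := hψ.continuous_deriv h1i
  have hcontg' : Continuous (deriv g) := hgsm.continuous_deriv h1i
  have hcontf' : Continuous (deriv f) := hf'.continuous_deriv h1i
  -- integrability facts
  have iA : Integrable (fun x => ‖deriv f x‖ ^ 2) := by
    apply Continuous.integrable_of_hasCompactSupport (hcontf'.norm.pow 2)
    apply HasCompactSupport.intro hsupp.deriv
    intro x hx
    simp only [Pi.pow_apply]
    rw [image_eq_zero_of_notMem_tsupport hx]
    simp
  have ig : Integrable g := hcontg.integrable_of_hasCompactSupport hgsupp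
  have iB : Integrable (fun x => ψ x ^ 2 * g x) :=
    Continuous.integrable_of_hasCompactSupport ((hcontψ.pow 2).mul hcontg)
      (HasCompactSupport.intro hKc (fun x hx => by rw [hgK x hx]; ring))
  have iC : Integrable (fun x => ψ x * deriv g x) :=
    Continuous.integrable_of_hasCompactSupport (hcontψ.mul hcontg')
      (HasCompactSupport.intro hKc (fun x hx => by rw [hg'K x hx]; ring))
  have iD : Integrable (fun x => deriv ψ x * g x) :=
    Continuous.integrable_of_hasCompactSupport (hcontψ'.mul hcontg)
      (HasCompactSupport.intro hKc (fun x hx => by rw [hgK x hx]; ring))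
  have hKsin : ∀ x, Real.sin x = 0 → x ∉ K := by
    intro x hx hK'
    exact (hsc x (hsub hK')).1.ne' hx
  have hKcos : ∀ x, Real.cos x = 0 → x ∉ K := by
    intro x hx hK'
    exact (hsc x (hsub hK')).2.ne' hx
  have ih₁ : Integrable h₁ := by
    apply Continuous.integrable_of_hasCompactSupport
    · rw [continuous_iff_continuousAt]
      intro x
      by_cases hsx : Real.sin x = 0
      · have hxK := hKsin x hsx
        have hopen : IsOpen (Kᶜ : Set ℝ) := hKc.isClosed.isOpen_compl
        refine ContinuousAt.congr (continuousAt_const (y := (0:ℝ))) ?_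
        filter_upwards [hopen.mem_nhds hxK] with y hy
        have : f y = 0 := image_eq_zero_of_notMem_tsupport hy
        simp [hh₁_def, this]
      · exact (hcontg.continuousAt.div ((Real.continuous_sin.pow 2).continuousAt)
          (pow_ne_zero 2 hsx))
    · exact HasCompactSupport.intro hKc (fun x hx => by
        have : f x = 0 := image_eq_zero_of_notMem_tsupport hx
        simp [hh₁_def, this])
  have ih₂ : Integrable h₂ := by
    apply Continuous.integrable_of_hasCompactSupport
    · rw [continuous_iff_continuousAt]
      intro x
      by_cases hcx : Real.cos x = 0
      · have hxK := hKcos x hcx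
        have hopen : IsOpen (Kᶜ : Set ℝ) := hKc.isClosed.isOpen_compl
        refine ContinuousAt.congr (continuousAt_const (y := (0:ℝ))) ?_
        filter_upwards [hopen.mem_nhds hxK] with y hy
        have : f y = 0 := image_eq_zero_of_notMem_tsupport hy
        simp [hh₂_def, this]
      · exact (hcontg.continuousAt.div ((Real.continuous_cos.pow 2).continuousAt)
          (pow_ne_zero 2 hcx))
    · exact HasCompactSupport.intro hKc (fun x hx => by
        have : f x = 0 := image_eq_zero_of_notMem_tsupport hx
        simp [hh₂_def, this])
  -- pointwise inequality
  have hpt : ∀ x, 0 ≤ ‖deriv f x‖ ^ 2 + (ψ x ^ 2 * g x + ψ x * deriv g x) := by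
    intro x
    rw [(hgd x).deriv, norm_sq_complex, hg_def]
    simp only []
    rw [norm_sq_complex]
    exact key_pt (ψ x) (deriv f x).re (deriv f x).im (f x).re (f x).im
  have hptI : 0 ≤ ∫ x in Ioo (0:ℝ) (Real.pi/2),
      (‖deriv f x‖ ^ 2 + (ψ x ^ 2 * g x + ψ x * deriv g x)) :=
    setIntegral_nonneg measurableSet_Ioo (fun x _ => hpt x)
  have hsplit : ∫ x in Ioo (0:ℝ) (Real.pi/2),
      (‖deriv f x‖ ^ 2 + (ψ x ^ 2 * g x + ψ x * deriv g x))
      = (∫ x in Ioo (0:ℝ) (Real.pi/2), ‖deriv f x‖ ^ 2)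
        + ((∫ x in Ioo (0:ℝ) (Real.pi/2), ψ x ^ 2 * g x)
          + ∫ x in Ioo (0:ℝ) (Real.pi/2), ψ x * deriv g x) := by
    have iBC : Integrable (fun x => ψ x ^ 2 * g x + ψ x * deriv g x) := by
      exact iB.add iC
    rw [integral_add iA.integrableOn iBC.integrableOn,
      integral_add iB.integrableOn iC.integrableOn]
  have hIBP' : (∫ x in Ioo (0:ℝ) (Real.pi/2), deriv ψ x * g x)
      + (∫ x in Ioo (0:ℝ) (Real.pi/2), ψ x * deriv g x) = 0 := by
    rw [← integral_add iD.integrableOn iC.integrableOn]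
    exact hIBP
  -- the integrand identity
  have hEq : EqOn (fun x => deriv ψ x * g x - ψ x ^ 2 * g x)
      (fun x => (α+β)^2 * g x + ((β - β^2) * h₁ x + (α - α^2) * h₂ x))
      (Ioo (0:ℝ) (Real.pi/2)) := by
    intro x hx
    simp only []
    by_cases hxab : x ∈ Ioo a b
    · obtain ⟨hs, hc⟩ := hsc x hx
      have hψx : ψ x = φ x := by
        simp [hψ_def, hχ1 x (Ioo_subset_Icc_self hxab)]
      have hevd : deriv ψ x = deriv φ x := by
        apply Filter.EventuallyEq.deriv_eq
        filter_upwards [isOpen_Ioo.mem_nhds hxab] with y hy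
        simp [hψ_def, hχ1 y (Ioo_subset_Icc_self hy)]
      have hpy := Real.sin_sq_add_cos_sq x
      have hφd : HasDerivAt φ
          (α * (1/(Real.cos x * Real.cos x)) + β * (1/(Real.sin x * Real.sin x))) x := by
        have hd1 : HasDerivAt (fun y => Real.sin y / Real.cos y)
            ((Real.cos x * Real.cos x - Real.sin x * -Real.sin x) / (Real.cos x)^2) x :=
          (Real.hasDerivAt_sin x).div (Real.hasDerivAt_cos x) hc.ne'
        have hd2 : HasDerivAt (fun y => Real.cos y / Real.sin y)
            ((-Real.sin x * Real.sin x - Real.cos x * Real.cos x) / (Real.sin x)^2) x :=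
          (Real.hasDerivAt_cos x).div (Real.hasDerivAt_sin x) hs.ne'
        have h3 := (hd1.const_mul α).sub (hd2.const_mul β)
        have e1 : Real.cos x * Real.cos x - Real.sin x * -Real.sin x = 1 := by
          linear_combination hpy
        have e2 : -Real.sin x * Real.sin x - Real.cos x * Real.cos x = -1 := by
          linear_combination -hpy
        rw [e1, e2] at h3
        exact h3.congr_deriv (by ring)
      rw [hevd, hφd.deriv, hψx]
      have hgoal := key_alg α β (Real.sin x) (Real.cos x) (g x) hs.ne' hc.ne' hpy
      calc (α * (1 / (Real.cos x * Real.cos x)) + β * (1 / (Real.sin x * Real.sin x))) * g x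
            - φ x ^ 2 * g x
          = (α * (1 / (Real.cos x * Real.cos x)) + β * (1 / (Real.sin x * Real.sin x))) * g x
            - (α*(Real.sin x/Real.cos x) - β*(Real.cos x/Real.sin x))^2 * g x := rfl
        _ = (α+β)^2 * g x + ((β - β^2) * (g x / Real.sin x ^ 2)
            + (α - α^2) * (g x / Real.cos x ^ 2)) := hgoal
        _ = (α+β)^2 * g x + ((β - β^2) * h₁ x + (α - α^2) * h₂ x) := rfl
    · have hxK : x ∉ K := fun h => hxab (hKab h)
      have hfx : f x = 0 := image_eq_zero_of_notMem_tsupport hxK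
      rw [hgK x hxK]
      simp [hh₁_def, hh₂_def, hfx]
  have hcongrI : ∫ x in Ioo (0:ℝ) (Real.pi/2), (deriv ψ x * g x - ψ x ^ 2 * g x)
      = ∫ x in Ioo (0:ℝ) (Real.pi/2),
        ((α+β)^2 * g x + ((β - β^2) * h₁ x + (α - α^2) * h₂ x)) :=
    setIntegral_congr_fun measurableSet_Ioo hEq
  have hsubI : ∫ x in Ioo (0:ℝ) (Real.pi/2), (deriv ψ x * g x - ψ x ^ 2 * g x)
      = (∫ x in Ioo (0:ℝ) (Real.pi/2), deriv ψ x * g x)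
        - ∫ x in Ioo (0:ℝ) (Real.pi/2), ψ x ^ 2 * g x :=
    integral_sub iD.integrableOn iB.integrableOn
  have hRHS : ∫ x in Ioo (0:ℝ) (Real.pi/2),
      ((α+β)^2 * g x + ((β - β^2) * h₁ x + (α - α^2) * h₂ x))
      = (α+β)^2 * (∫ x in Ioo (0:ℝ) (Real.pi/2), g x)
        + ((β - β^2) * (∫ x in Ioo (0:ℝ) (Real.pi/2), h₁ x)
          + (α - α^2) * ∫ x in Ioo (0:ℝ) (Real.pi/2), h₂ x) := by
    have j0 : Integrable (fun x => (α+β)^2 * g x) := by exact ig.const_mul _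
    have j1 : Integrable (fun x => (β - β^2) * h₁ x) := by exact ih₁.const_mul _
    have j2 : Integrable (fun x => (α - α^2) * h₂ x) := by exact ih₂.const_mul _
    have j12 : Integrable (fun x => (β - β^2) * h₁ x + (α - α^2) * h₂ x) := by
      exact j1.add j2
    rw [integral_add j0.integrableOn j12.integrableOn,
      integral_add j1.integrableOn j2.integrableOn,
      integral_const_mul, integral_const_mul, integral_const_mul]
  -- conclusion
  have goal_eq : ((α + β) ^ 2 * ∫ x in Ioo (0:ℝ) (Real.pi/2), g x)
      + (β - β ^ 2) * (∫ x in Ioo (0:ℝ) (Real.pi/2), h₁ x)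
      + (α - α ^ 2) * (∫ x in Ioo (0:ℝ) (Real.pi/2), h₂ x)
      ≤ ∫ x in Ioo (0:ℝ) (Real.pi/2), ‖deriv f x‖ ^ 2 := by
    linarith [hptI, hsplit, hIBP', hcongrI, hsubI, hRHS]
  exact goal_eq
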